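/- For a forest T_v of height n rooted at a hypernode v, with (v = x_0, x_1, …, x_n) the random hypernode sequence produced by the SEI selection process with importance function r, and assuming all relevant subtree costs are positive, the squared coefficient of variation of the SEI estimate is bounded by the variance of α: CV²(|v|·C_SEI(T_v)) ≤ Var( α(v, x_1, …, x_n) ). (Paper's Theorem 6.) -/
import Mathlib


open Finset

/-- A finite rooted tree on a finite node type `V`.  The root is its own parent,
every non-root node has a parent whose depth is one smaller, and the root is the
unique node of depth `0`. -/
structure FinRootedTree (V : Type) [Fintype V] [DecidableEq V] where
  root : V
  parent : V → V
  depth : V → ℕ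
  depth_root : depth root = 0
  parent_root : parent root = root
  depth_parent : ∀ v, v ≠ root → depth (parent v) + 1 = depth v
  eq_root_of_depth_zero : ∀ v, depth v = 0 → v = root

namespace FinRootedTree

variable {V : Type} [Fintype V] [DecidableEq V]

/-- The set of children of a node. -/
def children (T : FinRootedTree V) (x : V) : Finset V :=
  Finset.univ.filter fun w => w ≠ T.root ∧ T.parent w = x

/-- `S(v)`: the set of all children of nodes of a hypernode `v`. -/
def succs (T : FinRootedTree V) (v : Finset V) : Finset V :=
  v.biUnion T.children

/-- The set of nodes of the subtree rooted at `x` (the descendants of `x`,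
including `x` itself). -/
def desc (T : FinRootedTree V) (x : V) : Finset V :=
  Finset.univ.filter fun w =>
    x ∈ (Finset.range (T.depth w + 1)).image fun k => T.parent^[k] w

/-- `Cost(T_x)`: the total cost of the subtree rooted at `x`. -/
noncomputable def subtreeCost (T : FinRootedTree V) (c : V → ℝ) (x : V) : ℝ :=
  ∑ w ∈ T.desc x, c w

/-- `Cost(T_v)`: the total cost of the forest rooted at the hypernode `v`. -/
noncomputable def forestCost (T : FinRootedTree V) (c : V → ℝ) (v : Finset V) : ℝ :=
  ∑ x ∈ v, T.subtreeCost c x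

/-- `H(v)`: the hyperchildren of `v` for budget `B`, i.e. the subsets of `S(v)`
of size `min B |S(v)|`. -/
def hyper (T : FinRootedTree V) (B : ℕ) (v : Finset V) : Finset (Finset V) :=
  (T.succs v).powersetCard (min B (T.succs v).card)

/-- A hypernode: a nonempty set of distinct nodes, all at the same depth. -/
def IsHypernode (T : FinRootedTree V) (v : Finset V) : Prop :=
  v.Nonempty ∧ ∀ a ∈ v, ∀ b ∈ v, T.depth a = T.depth b

/-- Expectation functional of the SEI estimator `C_SEI(T_v)` (with importance
function `r`): `seiE T c B r fuel v g` is `E[g(C_SEI(T_v))]`, defined by the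
recursion of Algorithm 2, where the hypernode `w` is drawn from `H(v)` with
probability `r(w) / (r(S(v)) * C(|S(v)|-1, |w|-1))`, with enough fuel to reach
the leaves. -/
noncomputable def seiE (T : FinRootedTree V) (c : V → ℝ) (B : ℕ)
    (r : V → ℝ) : ℕ → Finset V → (ℝ → ℝ) → ℝ
  | 0, v, g => g ((∑ x ∈ v, c x) / (v.card : ℝ))
  | fuel + 1, v, g =>
      if T.succs v = ∅ then g ((∑ x ∈ v, c x) / (v.card : ℝ))
      else
        ∑ w ∈ T.hyper B v,
          ((∑ a ∈ w, r a) /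
              ((∑ a ∈ T.succs v, r a) *
                ((((T.succs v).card - 1).choose (w.card - 1) : ℕ) : ℝ))) *
            seiE T c B r fuel w fun y =>
              g ((∑ x ∈ v, c x) / (v.card : ℝ) +
                ((w.card : ℝ) / (v.card : ℝ)) *
                  ((∑ a ∈ T.succs v, r a) / (∑ a ∈ w, r a)) * y)

/-- `Var(|v| * C_SEI(T_v))`. -/
noncomputable def seiVar (T : FinRootedTree V) (c : V → ℝ) (B : ℕ) (r : V → ℝ)
    (fuel : ℕ) (v : Finset V) : ℝ :=
  seiE T c B r fuel v (fun y => ((v.card : ℝ) * y) ^ 2) -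
    (seiE T c B r fuel v fun y => (v.card : ℝ) * y) ^ 2

/-- `CV²(|v| * C_SEI(T_v)) = Var(|v| * C_SEI(T_v)) / E[|v| * C_SEI(T_v)]²`. -/
noncomputable def seiCV2 (T : FinRootedTree V) (c : V → ℝ) (B : ℕ) (r : V → ℝ)
    (fuel : ℕ) (v : Finset V) : ℝ :=
  seiVar T c B r fuel v /
    (seiE T c B r fuel v fun y => (v.card : ℝ) * y) ^ 2

/-- The set of all complete hypernode sequences `(x_1, …)` that can occur after
`x_0 = v` in the SEI selection process (each `x_{i+1} ∈ H(x_i)`, stopping at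
the terminal position `S(x_k) = ∅`), given enough fuel. -/
def seqs (T : FinRootedTree V) (B : ℕ) : ℕ → Finset V → Finset (List (Finset V))
  | 0, _ => {[]}
  | fuel + 1, v =>
      if T.succs v = ∅ then {[]}
      else (T.hyper B v).biUnion fun w => (seqs T B fuel w).image fun l => w :: l

/-- The probability that the SEI selection process started at `v` produces the
hypernode sequence `l`. -/
noncomputable def seqProb (T : FinRootedTree V) (r : V → ℝ) :
    Finset V → List (Finset V) → ℝ
  | _, [] => 1
  | v, w :: l =>
      ((∑ a ∈ w, r a) /
          ((∑ a ∈ T.succs v, r a) *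
            ((((T.succs v).card - 1).choose (w.card - 1) : ℕ) : ℝ))) *
        seqProb T r w l

/-- `α(x_0, x_1, …, x_n) = ∏_{i=1}^n (r(S(x_{i-1}))/r(x_i)) * (Cost(T_{x_i})/Cost(T_{S(x_{i-1})}))`,
for the sequence starting at `v` and continuing along the list `l`. -/
noncomputable def alphaSeq (T : FinRootedTree V) (c r : V → ℝ) :
    Finset V → List (Finset V) → ℝ
  | _, [] => 1
  | v, w :: l =>
      ((∑ a ∈ T.succs v, r a) / (∑ a ∈ w, r a)) *
        (T.forestCost c w / T.forestCost c (T.succs v)) * alphaSeq T c r w l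


section Lemmas

variable {T : FinRootedTree V} {c r : V → ℝ} {B : ℕ}

lemma depth_parent_iterate (T : FinRootedTree V) (w : V) :
    ∀ k, k ≤ T.depth w → T.depth (T.parent^[k] w) = T.depth w - k := by
  intro k
  induction k with
  | zero => simp
  | succ k ih =>
    intro hk
    have h1 : T.depth (T.parent^[k] w) = T.depth w - k := ih (by omega)
    have hz : T.parent^[k] w ≠ T.root := by
      intro h
      rw [h, T.depth_root] at h1
      omega
    have h2 := T.depth_parent _ hz
    rw [Function.iterate_succ_apply']
    omega

lemma depth_lt_card (T : FinRootedTree V) (x : V) : T.depth x < Fintype.card V := by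
  have hinj : Set.InjOn (fun k => T.parent^[k] x) ↑(Finset.range (T.depth x + 1)) := by
    intro k1 h1 k2 h2 he
    simp only [Finset.coe_range, Set.mem_Iio] at h1 h2
    have e1 := T.depth_parent_iterate x k1 (by omega)
    have e2 := T.depth_parent_iterate x k2 (by omega)
    simp only at he
    rw [he, e2] at e1
    omega
  have := Finset.card_le_card_of_injOn (fun k => T.parent^[k] x)
    (fun _ _ => Finset.mem_univ _) hinj
  simp only [Finset.card_range, Finset.card_univ] at this
  omega

lemma mem_children {x y : V} : y ∈ T.children x ↔ y ≠ T.root ∧ T.parent y = x := by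
  simp [FinRootedTree.children]

lemma depth_of_mem_children {x y : V} (h : y ∈ T.children x) :
    T.depth y = T.depth x + 1 := by
  obtain ⟨h1, h2⟩ := mem_children.1 h
  have := T.depth_parent y h1
  rw [h2] at this
  omega

lemma mem_desc {x y : V} : y ∈ T.desc x ↔ ∃ k, k ≤ T.depth y ∧ T.parent^[k] y = x := by
  simp only [FinRootedTree.desc, Finset.mem_filter, Finset.mem_univ, true_and,
    Finset.mem_image, Finset.mem_range, Nat.lt_succ_iff]

lemma self_mem_desc (x : V) : x ∈ T.desc x := mem_desc.2 ⟨0, Nat.zero_le _, rfl⟩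

lemma depth_le_of_mem_desc {x y : V} (h : y ∈ T.desc x) : T.depth x ≤ T.depth y := by
  obtain ⟨k, hk, rfl⟩ := mem_desc.1 h
  have := T.depth_parent_iterate y k hk
  omega

lemma desc_disjoint {z₁ z₂ : V} (hd : T.depth z₁ = T.depth z₂) (h : z₁ ≠ z₂) :
    Disjoint (T.desc z₁) (T.desc z₂) := by
  rw [Finset.disjoint_left]
  intro y h1 h2
  obtain ⟨k1, hk1, he1⟩ := mem_desc.1 h1
  obtain ⟨k2, hk2, he2⟩ := mem_desc.1 h2
  have e1 := T.depth_parent_iterate y k1 hk1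
  have e2 := T.depth_parent_iterate y k2 hk2
  rw [he1] at e1
  rw [he2] at e2
  have : k1 = k2 := by omega
  exact h (by rw [← he1, ← he2, this])

lemma desc_eq_insert (x : V) :
    T.desc x = insert x ((T.children x).biUnion T.desc) := by
  ext y
  simp only [Finset.mem_insert, Finset.mem_biUnion]
  constructor
  · intro h
    obtain ⟨k, hk, he⟩ := mem_desc.1 h
    rcases Nat.eq_zero_or_pos k with rfl | hkpos
    · exact Or.inl (by simpa using he)
    · right
      obtain ⟨k', rfl⟩ : ∃ k', k = k' + 1 := ⟨k - 1, by omega⟩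
      refine ⟨T.parent^[k'] y, ?_, mem_desc.2 ⟨k', by omega, rfl⟩⟩
      have hd := T.depth_parent_iterate y k' (by omega)
      have hd2 := T.depth_parent_iterate y (k' + 1) hk
      rw [he] at hd2
      refine mem_children.2 ⟨?_, ?_⟩
      · intro hroot
        rw [hroot, T.depth_root] at hd
        omega
      · have hit := Function.iterate_succ_apply' T.parent k' y
        rw [← hit, he]
  · rintro (rfl | ⟨z, hz, hy⟩)
    · exact self_mem_desc _
    · obtain ⟨k, hk, rfl⟩ := mem_desc.1 hy
      have hdz := depth_of_mem_children hz
      have hd := T.depth_parent_iterate y k hk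
      refine mem_desc.2 ⟨k + 1, by omega, ?_⟩
      have hit := Function.iterate_succ_apply' T.parent k y
      rw [hit, (mem_children.1 hz).2]

lemma notMem_children_biUnion (x : V) : x ∉ (T.children x).biUnion T.desc := by
  intro h
  obtain ⟨z, hz, hx⟩ := Finset.mem_biUnion.1 h
  have h1 := depth_le_of_mem_desc hx
  have h2 := depth_of_mem_children hz
  omega

lemma subtreeCost_rec (x : V) :
    T.subtreeCost c x = c x + ∑ y ∈ T.children x, T.subtreeCost c y := by
  rw [FinRootedTree.subtreeCost, desc_eq_insert,
    Finset.sum_insert (notMem_children_biUnion x),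
    Finset.sum_biUnion]
  · rfl
  · intro z1 h1 z2 h2 hne
    exact desc_disjoint (by rw [depth_of_mem_children (Finset.mem_coe.1 h1),
      depth_of_mem_children (Finset.mem_coe.1 h2)]) hne

lemma children_pairwise_disjoint (v : Finset V) :
    Set.PairwiseDisjoint ↑v T.children := by
  intro x1 _ x2 _ hne
  rw [Function.onFun, Finset.disjoint_left]
  intro y h1 h2
  exact hne ((mem_children.1 h1).2 ▸ (mem_children.1 h2).2)

lemma forestCost_rec (v : Finset V) :
    T.forestCost c v = (∑ x ∈ v, c x) + T.forestCost c (T.succs v) := by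
  rw [FinRootedTree.forestCost, FinRootedTree.forestCost, FinRootedTree.succs,
    Finset.sum_biUnion (children_pairwise_disjoint v), ← Finset.sum_add_distrib]
  exact Finset.sum_congr rfl fun x _ => subtreeCost_rec x

lemma forestCost_pos (hpos : ∀ x : V, 0 < T.subtreeCost c x) {v : Finset V}
    (hv : v.Nonempty) : 0 < T.forestCost c v :=
  Finset.sum_pos (fun x _ => hpos x) hv

lemma forestCost_nonneg (hpos : ∀ x : V, 0 < T.subtreeCost c x) (v : Finset V) :
    0 ≤ T.forestCost c v :=
  Finset.sum_nonneg fun x _ => (hpos x).le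

lemma card_filter_mem_powersetCard (s : Finset V) {k : ℕ} (hk : 1 ≤ k) {x : V}
    (hx : x ∈ s) :
    ((s.powersetCard k).filter fun w => x ∈ w).card = (s.card - 1).choose (k - 1) := by
  have key : ((s.powersetCard k).filter fun w => x ∈ w).card
      = ((s.erase x).powersetCard (k - 1)).card := by
    refine Finset.card_bij' (fun w _ => w.erase x) (fun u _ => insert x u) ?_ ?_ ?_ ?_
    · intro w hw
      simp only [Finset.mem_filter, Finset.mem_powersetCard] at hw
      obtain ⟨⟨hsub, hcard⟩, hxw⟩ := hw
      exact Finset.mem_powersetCard.2 ⟨Finset.erase_subset_erase x hsub,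
        by rw [Finset.card_erase_of_mem hxw, hcard]⟩
    · intro u hu
      simp only [Finset.mem_powersetCard] at hu
      obtain ⟨hsub, hcard⟩ := hu
      have hxu : x ∉ u := fun h => (Finset.mem_erase.1 (hsub h)).1 rfl
      refine Finset.mem_filter.2 ⟨Finset.mem_powersetCard.2 ⟨?_, ?_⟩,
        Finset.mem_insert_self x u⟩
      · exact Finset.insert_subset hx (hsub.trans (Finset.erase_subset x s))
      · rw [Finset.card_insert_of_notMem hxu, hcard]; omega
    · intro w hw
      simp only [Finset.mem_filter] at hw
      exact Finset.insert_erase hw.2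
    · intro u hu
      simp only [Finset.mem_powersetCard] at hu
      have hxu : x ∉ u := fun h => (Finset.mem_erase.1 (hu.1 h)).1 rfl
      exact Finset.erase_insert hxu
  rw [key, Finset.card_powersetCard, Finset.card_erase_of_mem hx]

lemma sum_powersetCard_sum (s : Finset V) {k : ℕ} (hk : 1 ≤ k) (g : V → ℝ) :
    ∑ w ∈ s.powersetCard k, ∑ x ∈ w, g x
      = ((s.card - 1).choose (k - 1) : ℝ) * ∑ x ∈ s, g x := by
  have h1 : ∀ w ∈ s.powersetCard k,
      ∑ x ∈ w, g x = ∑ x ∈ s, if x ∈ w then g x else 0 := by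
    intro w hw
    rw [← Finset.sum_filter, Finset.filter_mem_eq_inter,
      Finset.inter_eq_right.2 (Finset.mem_powersetCard.1 hw).1]
  rw [Finset.sum_congr rfl h1, Finset.sum_comm]
  rw [Finset.mul_sum]
  refine Finset.sum_congr rfl fun x hx => ?_
  rw [← Finset.sum_filter, Finset.sum_const, card_filter_mem_powersetCard s hk hx,
    nsmul_eq_mul]

lemma hyper_mem {v w : Finset V} (hw : w ∈ T.hyper B v) :
    w ⊆ T.succs v ∧ w.card = min B (T.succs v).card := Finset.mem_powersetCard.1 hw

lemma hyper_nonempty (hB : 1 ≤ B) {v w : Finset V} (hS : (T.succs v).Nonempty)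
    (hw : w ∈ T.hyper B v) : w.Nonempty := by
  rw [← Finset.card_pos, (hyper_mem hw).2]
  exact lt_min hB (Finset.card_pos.2 hS)

lemma rsum_pos (hr : ∀ x : V, 0 < r x) {w : Finset V} (hw : w.Nonempty) :
    0 < ∑ a ∈ w, r a :=
  Finset.sum_pos (fun x _ => hr x) hw

lemma choose_cast_pos {v w : Finset V} (hS : (T.succs v).Nonempty) (hB : 1 ≤ B)
    (hw : w ∈ T.hyper B v) :
    0 < ((((T.succs v).card - 1).choose (w.card - 1) : ℕ) : ℝ) := by
  obtain ⟨hsub, hcard⟩ := hyper_mem hw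
  have h : w.card - 1 ≤ (T.succs v).card - 1 := by
    have := min_le_right B (T.succs v).card
    omega
  exact_mod_cast Nat.choose_pos h

lemma sum_hyper_div {v : Finset V} (hS : (T.succs v).Nonempty) (hB : 1 ≤ B)
    (g : V → ℝ) :
    ∑ w ∈ T.hyper B v,
        (∑ x ∈ w, g x) / ((((T.succs v).card - 1).choose (w.card - 1) : ℕ) : ℝ)
      = ∑ x ∈ T.succs v, g x := by
  have hk : 1 ≤ min B (T.succs v).card := le_min hB (Finset.card_pos.2 hS)
  have hstep : ∀ w ∈ T.hyper B v,
      (∑ x ∈ w, g x) / ((((T.succs v).card - 1).choose (w.card - 1) : ℕ) : ℝ)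
        = (∑ x ∈ w, g x) /
            ((((T.succs v).card - 1).choose (min B (T.succs v).card - 1) : ℕ) : ℝ) := by
    intro w hw
    rw [(hyper_mem hw).2]
  rw [Finset.sum_congr rfl hstep, ← Finset.sum_div, FinRootedTree.hyper,
    sum_powersetCard_sum _ hk g]
  have hpos : (0:ℝ) < ((((T.succs v).card - 1).choose (min B (T.succs v).card - 1) : ℕ) : ℝ) := by
    have h : min B (T.succs v).card - 1 ≤ (T.succs v).card - 1 := by
      have := min_le_right B (T.succs v).card
      omega
    exact_mod_cast Nat.choose_pos h
  rw [mul_comm, mul_div_assoc, div_self (ne_of_gt hpos), mul_one]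

lemma sum_P {v : Finset V} (hS : (T.succs v).Nonempty) (hB : 1 ≤ B)
    (hr : ∀ x : V, 0 < r x) :
    ∑ w ∈ T.hyper B v, (∑ a ∈ w, r a) /
        ((∑ a ∈ T.succs v, r a) *
          ((((T.succs v).card - 1).choose (w.card - 1) : ℕ) : ℝ)) = 1 := by
  have hstep : ∀ w ∈ T.hyper B v, (∑ a ∈ w, r a) /
      ((∑ a ∈ T.succs v, r a) *
        ((((T.succs v).card - 1).choose (w.card - 1) : ℕ) : ℝ))
      = (∑ x ∈ w, r x / (∑ a ∈ T.succs v, r a)) /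
          ((((T.succs v).card - 1).choose (w.card - 1) : ℕ) : ℝ) := by
    intro w _
    rw [← Finset.sum_div, div_div]
  rw [Finset.sum_congr rfl hstep, sum_hyper_div hS hB, ← Finset.sum_div,
    div_self (ne_of_gt (rsum_pos hr hS))]

lemma sum_P_weight {v : Finset V} (hS : (T.succs v).Nonempty) (hB : 1 ≤ B)
    (hr : ∀ x : V, 0 < r x) (f : V → ℝ) :
    ∑ w ∈ T.hyper B v, ((∑ a ∈ w, r a) /
        ((∑ a ∈ T.succs v, r a) *
          ((((T.succs v).card - 1).choose (w.card - 1) : ℕ) : ℝ))) *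
        ((∑ a ∈ T.succs v, r a) / (∑ a ∈ w, r a) * (∑ x ∈ w, f x))
      = ∑ x ∈ T.succs v, f x := by
  have hstep : ∀ w ∈ T.hyper B v, ((∑ a ∈ w, r a) /
      ((∑ a ∈ T.succs v, r a) *
        ((((T.succs v).card - 1).choose (w.card - 1) : ℕ) : ℝ))) *
      ((∑ a ∈ T.succs v, r a) / (∑ a ∈ w, r a) * (∑ x ∈ w, f x))
      = (∑ x ∈ w, f x) /
          ((((T.succs v).card - 1).choose (w.card - 1) : ℕ) : ℝ) := by
    intro w hw
    have h1 : (∑ a ∈ w, r a) ≠ 0 := ne_of_gt (rsum_pos hr (hyper_nonempty hB hS hw))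
    have h2 : (∑ a ∈ T.succs v, r a) ≠ 0 := ne_of_gt (rsum_pos hr hS)
    have h3 : ((((T.succs v).card - 1).choose (w.card - 1) : ℕ) : ℝ) ≠ 0 :=
      ne_of_gt (choose_cast_pos hS hB hw)
    field_simp
  rw [Finset.sum_congr rfl hstep, sum_hyper_div hS hB]

/-- `|v| * C_SEI(T_v)` along a fixed hypernode sequence. -/
noncomputable def Xval (T : FinRootedTree V) (c r : V → ℝ) :
    Finset V → List (Finset V) → ℝ
  | v, [] => ∑ x ∈ v, c x
  | v, w :: l => (∑ x ∈ v, c x) +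
      ((∑ a ∈ T.succs v, r a) / (∑ a ∈ w, r a)) * Xval T c r w l

lemma sum_seqs_succ {v : Finset V} {f : ℕ} (hS : T.succs v ≠ ∅)
    (φ : List (Finset V) → ℝ) :
    ∑ l ∈ seqs T B (f + 1) v, φ l
      = ∑ w ∈ T.hyper B v, ∑ l ∈ seqs T B f w, φ (w :: l) := by
  have hdisj : Set.PairwiseDisjoint ↑(T.hyper B v)
      (fun w => (seqs T B f w).image fun l => w :: l) := by
    intro w1 _ w2 _ hne
    rw [Function.onFun, Finset.disjoint_left]
    intro l h1 h2
    obtain ⟨l1, _, rfl⟩ := Finset.mem_image.1 h1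
    obtain ⟨l2, _, he⟩ := Finset.mem_image.1 h2
    exact hne (List.cons.injEq .. ▸ he : _ ∧ _).1.symm
  rw [FinRootedTree.seqs, if_neg hS, Finset.sum_biUnion hdisj]
  refine Finset.sum_congr rfl fun w _ => Finset.sum_image ?_
  intro l1 _ l2 _ h
  exact (List.cons.injEq .. ▸ h : _ ∧ _).2

lemma seqProb_nonneg (hr : ∀ x : V, 0 < r x) :
    ∀ (l : List (Finset V)) (v : Finset V), 0 ≤ seqProb T r v l := by
  intro l
  induction l with
  | nil => intro v; simp [FinRootedTree.seqProb]
  | cons w l ih =>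
    intro v
    simp only [FinRootedTree.seqProb]
    apply mul_nonneg _ (ih w)
    apply div_nonneg (Finset.sum_nonneg fun x _ => (hr x).le)
    apply mul_nonneg (Finset.sum_nonneg fun x _ => (hr x).le) (Nat.cast_nonneg _)

lemma sum_seqProb (hB : 1 ≤ B) (hr : ∀ x : V, 0 < r x) :
    ∀ (f : ℕ) (v : Finset V), ∑ l ∈ seqs T B f v, seqProb T r v l = 1 := by
  intro f
  induction f with
  | zero => intro v; simp [FinRootedTree.seqs, FinRootedTree.seqProb]
  | succ f ih =>
    intro v
    by_cases hS : T.succs v = ∅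
    · simp [FinRootedTree.seqs, hS, FinRootedTree.seqProb]
    · have hSne : (T.succs v).Nonempty := Finset.nonempty_iff_ne_empty.2 hS
      rw [sum_seqs_succ hS]
      have hstep : ∀ w ∈ T.hyper B v,
          ∑ l ∈ seqs T B f w, seqProb T r v (w :: l)
            = (∑ a ∈ w, r a) /
                ((∑ a ∈ T.succs v, r a) *
                  ((((T.succs v).card - 1).choose (w.card - 1) : ℕ) : ℝ)) := by
        intro w _
        simp only [FinRootedTree.seqProb]
        rw [← Finset.mul_sum, ih w, mul_one]
      rw [Finset.sum_congr rfl hstep, sum_P hSne hB hr]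

lemma sum_seqProb_alpha (hB : 1 ≤ B) (hr : ∀ x : V, 0 < r x)
    (hpos : ∀ x : V, 0 < T.subtreeCost c x) :
    ∀ (f : ℕ) (v : Finset V),
      ∑ l ∈ seqs T B f v, seqProb T r v l * alphaSeq T c r v l = 1 := by
  intro f
  induction f with
  | zero => intro v; simp [FinRootedTree.seqs, FinRootedTree.seqProb, FinRootedTree.alphaSeq]
  | succ f ih =>
    intro v
    by_cases hS : T.succs v = ∅
    · simp [FinRootedTree.seqs, hS, FinRootedTree.seqProb, FinRootedTree.alphaSeq]
    · have hSne : (T.succs v).Nonempty := Finset.nonempty_iff_ne_empty.2 hS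
      have hCS : (0:ℝ) < T.forestCost c (T.succs v) := forestCost_pos hpos hSne
      rw [sum_seqs_succ hS]
      have hstep : ∀ w ∈ T.hyper B v,
          ∑ l ∈ seqs T B f w, seqProb T r v (w :: l) * alphaSeq T c r v (w :: l)
            = ((∑ a ∈ w, r a) /
                ((∑ a ∈ T.succs v, r a) *
                  ((((T.succs v).card - 1).choose (w.card - 1) : ℕ) : ℝ))) *
              ((∑ a ∈ T.succs v, r a) / (∑ a ∈ w, r a) *
                (∑ x ∈ w, T.subtreeCost c x / T.forestCost c (T.succs v))) := by
        intro w _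
        simp only [FinRootedTree.seqProb, FinRootedTree.alphaSeq]
        have : ∀ l, ((∑ a ∈ w, r a) /
              ((∑ a ∈ T.succs v, r a) *
                ((((T.succs v).card - 1).choose (w.card - 1) : ℕ) : ℝ)) * seqProb T r w l) *
            ((∑ a ∈ T.succs v, r a) / (∑ a ∈ w, r a) *
              (T.forestCost c w / T.forestCost c (T.succs v)) * alphaSeq T c r w l)
            = (((∑ a ∈ w, r a) /
              ((∑ a ∈ T.succs v, r a) *
                ((((T.succs v).card - 1).choose (w.card - 1) : ℕ) : ℝ))) *
              ((∑ a ∈ T.succs v, r a) / (∑ a ∈ w, r a) *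
                (T.forestCost c w / T.forestCost c (T.succs v)))) *
              (seqProb T r w l * alphaSeq T c r w l) := by
          intro l; ring
        rw [Finset.sum_congr rfl fun l _ => this l, ← Finset.mul_sum, ih w, mul_one,
          FinRootedTree.forestCost]
        congr 1
        congr 1
        rw [Finset.sum_div]
      rw [Finset.sum_congr rfl hstep, sum_P_weight hSne hB hr, ← Finset.sum_div,
        ← FinRootedTree.forestCost, div_self (ne_of_gt hCS)]

lemma depth_cond_succs {v w : Finset V} {f : ℕ} (hw : w ∈ T.hyper B v)
    (h : ∀ x ∈ v, Fintype.card V ≤ T.depth x + (f + 1)) :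
    ∀ y ∈ w, Fintype.card V ≤ T.depth y + f := by
  intro y hy
  have hsub : y ∈ T.succs v := (hyper_mem hw).1 hy
  obtain ⟨x, hx, hyc⟩ := Finset.mem_biUnion.1 hsub
  have := depth_of_mem_children hyc
  have := h x hx
  omega

lemma sum_seqProb_X (hB : 1 ≤ B) (hr : ∀ x : V, 0 < r x) :
    ∀ (f : ℕ) (v : Finset V), (∀ x ∈ v, Fintype.card V ≤ T.depth x + f) →
      ∑ l ∈ seqs T B f v, seqProb T r v l * Xval T c r v l = T.forestCost c v := by
  intro f
  induction f with
  | zero =>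
    intro v hd
    rcases Finset.eq_empty_or_nonempty v with rfl | ⟨x, hx⟩
    · simp [FinRootedTree.seqs, FinRootedTree.seqProb, Xval, FinRootedTree.forestCost]
    · exact absurd (hd x hx) (by have := depth_lt_card T x; omega)
  | succ f ih =>
    intro v hd
    by_cases hS : T.succs v = ∅
    · have : T.forestCost c v = ∑ x ∈ v, c x := by
        rw [forestCost_rec, hS]
        simp [FinRootedTree.forestCost]
      simp [FinRootedTree.seqs, hS, FinRootedTree.seqProb, Xval, this]
    · have hSne : (T.succs v).Nonempty := Finset.nonempty_iff_ne_empty.2 hS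
      rw [sum_seqs_succ hS]
      have hstep : ∀ w ∈ T.hyper B v,
          ∑ l ∈ seqs T B f w, seqProb T r v (w :: l) * Xval T c r v (w :: l)
            = ((∑ a ∈ w, r a) /
                ((∑ a ∈ T.succs v, r a) *
                  ((((T.succs v).card - 1).choose (w.card - 1) : ℕ) : ℝ))) * (∑ x ∈ v, c x) +
              ((∑ a ∈ w, r a) /
                ((∑ a ∈ T.succs v, r a) *
                  ((((T.succs v).card - 1).choose (w.card - 1) : ℕ) : ℝ))) *
                ((∑ a ∈ T.succs v, r a) / (∑ a ∈ w, r a) *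
                  (∑ x ∈ w, T.subtreeCost c x)) := by
        intro w hw
        simp only [FinRootedTree.seqProb, Xval]
        have hrw : ∀ l, ((∑ a ∈ w, r a) /
              ((∑ a ∈ T.succs v, r a) *
                ((((T.succs v).card - 1).choose (w.card - 1) : ℕ) : ℝ)) * seqProb T r w l) *
            ((∑ x ∈ v, c x) +
              (∑ a ∈ T.succs v, r a) / (∑ a ∈ w, r a) * Xval T c r w l)
            = ((∑ a ∈ w, r a) /
              ((∑ a ∈ T.succs v, r a) *
                ((((T.succs v).card - 1).choose (w.card - 1) : ℕ) : ℝ))) *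
                ((∑ x ∈ v, c x) * seqProb T r w l) +
              ((∑ a ∈ w, r a) /
              ((∑ a ∈ T.succs v, r a) *
                ((((T.succs v).card - 1).choose (w.card - 1) : ℕ) : ℝ))) *
                ((∑ a ∈ T.succs v, r a) / (∑ a ∈ w, r a) *
                  (seqProb T r w l * Xval T c r w l)) := by
          intro l; ring
        rw [Finset.sum_congr rfl fun l _ => hrw l, Finset.sum_add_distrib,
          ← Finset.mul_sum, ← Finset.mul_sum, ← Finset.mul_sum, ← Finset.mul_sum,
          sum_seqProb hB hr, mul_one, ih w (depth_cond_succs hw hd)]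
        rfl
      rw [Finset.sum_congr rfl hstep, Finset.sum_add_distrib, ← Finset.sum_mul,
        sum_P hSne hB hr, one_mul, sum_P_weight hSne hB hr, forestCost_rec]
      rfl

lemma seiE_eq (hB : 1 ≤ B) (hr : ∀ x : V, 0 < r x) :
    ∀ (f : ℕ) (v : Finset V) (g : ℝ → ℝ), v.Nonempty →
      seiE T c B r f v g
        = ∑ l ∈ seqs T B f v,
            seqProb T r v l * g (Xval T c r v l / (v.card : ℝ)) := by
  intro f
  induction f with
  | zero =>
    intro v g _
    simp [FinRootedTree.seiE, FinRootedTree.seqs, FinRootedTree.seqProb, Xval]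
  | succ f ih =>
    intro v g hv
    by_cases hS : T.succs v = ∅
    · simp [FinRootedTree.seiE, hS, FinRootedTree.seqs, FinRootedTree.seqProb, Xval]
    · have hSne : (T.succs v).Nonempty := Finset.nonempty_iff_ne_empty.2 hS
      simp only [FinRootedTree.seiE, if_neg hS]
      rw [sum_seqs_succ hS]
      refine Finset.sum_congr rfl fun w hw => ?_
      have hwne := hyper_nonempty hB hSne hw
      have hw0 : (w.card : ℝ) ≠ 0 := Nat.cast_ne_zero.2 (Finset.card_ne_zero.2 hwne)
      have hv0 : (v.card : ℝ) ≠ 0 := Nat.cast_ne_zero.2 (Finset.card_ne_zero.2 hv)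
      rw [ih w _ hwne, Finset.mul_sum]
      refine Finset.sum_congr rfl fun l _ => ?_
      have hrw0 : (∑ a ∈ w, r a) ≠ 0 := ne_of_gt (rsum_pos hr hwne)
      simp only [FinRootedTree.seqProb, Xval]
      rw [← mul_assoc]
      congr 1
      congr 1
      field_simp

lemma sq_sum_le_sum_mul {ι : Type} (s : Finset ι) (p q : ι → ℝ)
    (hp : ∀ i ∈ s, 0 ≤ p i) :
    (∑ i ∈ s, p i * q i) ^ 2 ≤ (∑ i ∈ s, p i) * ∑ i ∈ s, p i * q i ^ 2 := by
  calc (∑ i ∈ s, p i * q i) ^ 2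
      = (∑ i ∈ s, Real.sqrt (p i) * (Real.sqrt (p i) * q i)) ^ 2 := by
        refine congrArg (· ^ 2) (Finset.sum_congr rfl fun i hi => ?_)
        rw [← mul_assoc, Real.mul_self_sqrt (hp i hi)]
    _ ≤ (∑ i ∈ s, Real.sqrt (p i) ^ 2) * ∑ i ∈ s, (Real.sqrt (p i) * q i) ^ 2 :=
        Finset.sum_mul_sq_le_sq_mul_sq s _ _
    _ = (∑ i ∈ s, p i) * ∑ i ∈ s, p i * q i ^ 2 := by
        congr 1
        · exact Finset.sum_congr rfl fun i hi => Real.sq_sqrt (hp i hi)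
        · refine Finset.sum_congr rfl fun i hi => ?_
          rw [mul_pow, Real.sq_sqrt (hp i hi)]

lemma one_le_A2 (hB : 1 ≤ B) (hr : ∀ x : V, 0 < r x)
    (hpos : ∀ x : V, 0 < T.subtreeCost c x) (f : ℕ) (v : Finset V) :
    1 ≤ ∑ l ∈ seqs T B f v, seqProb T r v l * alphaSeq T c r v l ^ 2 := by
  have h := sq_sum_le_sum_mul (seqs T B f v) (fun l => seqProb T r v l)
    (fun l => alphaSeq T c r v l) (fun l _ => seqProb_nonneg hr l v)
  rw [sum_seqProb hB hr, sum_seqProb_alpha hB hr hpos, one_mul, one_pow] at h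
  exact h

lemma main_sq_ineq (hB : 1 ≤ B) (hr : ∀ x : V, 0 < r x)
    (hpos : ∀ x : V, 0 < T.subtreeCost c x) (hc : ∀ x, 0 ≤ c x) :
    ∀ (f : ℕ) (v : Finset V), v.Nonempty →
      (∀ x ∈ v, Fintype.card V ≤ T.depth x + f) →
      ∑ l ∈ seqs T B f v, seqProb T r v l * Xval T c r v l ^ 2
        ≤ T.forestCost c v ^ 2 *
            ∑ l ∈ seqs T B f v, seqProb T r v l * alphaSeq T c r v l ^ 2 := by
  intro f
  induction f with
  | zero =>
    intro v hv hd
    obtain ⟨x, hx⟩ := hv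
    exact absurd (hd x hx) (by have := depth_lt_card T x; omega)
  | succ f ih =>
    intro v hv hd
    by_cases hS : T.succs v = ∅
    · have hfc : T.forestCost c v = ∑ x ∈ v, c x := by
        rw [forestCost_rec, hS]
        simp [FinRootedTree.forestCost]
      simp [FinRootedTree.seqs, hS, FinRootedTree.seqProb, Xval,
        FinRootedTree.alphaSeq, hfc]
    · have hSne : (T.succs v).Nonempty := Finset.nonempty_iff_ne_empty.2 hS
      have hCS : (0:ℝ) < (T.forestCost c (T.succs v)) := forestCost_pos hpos hSne
      have hcv : (0:ℝ) ≤ (∑ x ∈ v, c x) := Finset.sum_nonneg fun x _ => hc x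
      have hPnn : ∀ w ∈ T.hyper B v, (0:ℝ) ≤ ((∑ a ∈ w, r a) /
            ((∑ a ∈ T.succs v, r a) *
              ((((T.succs v).card - 1).choose (w.card - 1) : ℕ) : ℝ))) := by
        intro w _
        apply div_nonneg (Finset.sum_nonneg fun x _ => (hr x).le)
        exact mul_nonneg (Finset.sum_nonneg fun x _ => (hr x).le) (Nat.cast_nonneg _)
      have hCWnn : ∀ w : Finset V, (0:ℝ) ≤ (T.forestCost c w) := fun w => forestCost_nonneg hpos w
      have hP1 : ∑ w ∈ T.hyper B v, ((∑ a ∈ w, r a) /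
            ((∑ a ∈ T.succs v, r a) *
              ((((T.succs v).card - 1).choose (w.card - 1) : ℕ) : ℝ))) = 1 := sum_P hSne hB hr
      have hPC : ∑ w ∈ T.hyper B v, ((∑ a ∈ w, r a) /
            ((∑ a ∈ T.succs v, r a) *
              ((((T.succs v).card - 1).choose (w.card - 1) : ℕ) : ℝ))) * (((∑ a ∈ T.succs v, r a) / (∑ a ∈ w, r a)) * (T.forestCost c w)) = (T.forestCost c (T.succs v)) := by
        have h := sum_P_weight hSne hB hr (T.subtreeCost c)
        simpa [FinRootedTree.forestCost] using h
      have hL : ∀ w ∈ T.hyper B v,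
          ∑ l ∈ seqs T B f w, seqProb T r v (w :: l) * Xval T c r v (w :: l) ^ 2
            = ((∑ a ∈ w, r a) /
            ((∑ a ∈ T.succs v, r a) *
              ((((T.succs v).card - 1).choose (w.card - 1) : ℕ) : ℝ))) * ((∑ x ∈ v, c x) ^ 2 + 2 * (∑ x ∈ v, c x) * (((∑ a ∈ T.succs v, r a) / (∑ a ∈ w, r a)) * (T.forestCost c w)) + ((∑ a ∈ T.succs v, r a) / (∑ a ∈ w, r a)) ^ 2 * (∑ l ∈ seqs T B f w, seqProb T r w l * Xval T c r w l ^ 2)) := by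
        intro w hw
        simp only [FinRootedTree.seqProb, Xval]
        have hexp : ∀ l, (((∑ a ∈ w, r a) /
            ((∑ a ∈ T.succs v, r a) *
              ((((T.succs v).card - 1).choose (w.card - 1) : ℕ) : ℝ))) * seqProb T r w l) *
            ((∑ x ∈ v, c x) + ((∑ a ∈ T.succs v, r a) / (∑ a ∈ w, r a)) * Xval T c r w l) ^ 2
            = ((∑ a ∈ w, r a) /
            ((∑ a ∈ T.succs v, r a) *
              ((((T.succs v).card - 1).choose (w.card - 1) : ℕ) : ℝ))) * ((∑ x ∈ v, c x) ^ 2 * seqProb T r w l)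
              + ((∑ a ∈ w, r a) /
            ((∑ a ∈ T.succs v, r a) *
              ((((T.succs v).card - 1).choose (w.card - 1) : ℕ) : ℝ))) * ((2 * (∑ x ∈ v, c x) * ((∑ a ∈ T.succs v, r a) / (∑ a ∈ w, r a))) * (seqProb T r w l * Xval T c r w l))
              + ((∑ a ∈ w, r a) /
            ((∑ a ∈ T.succs v, r a) *
              ((((T.succs v).card - 1).choose (w.card - 1) : ℕ) : ℝ))) * (((∑ a ∈ T.succs v, r a) / (∑ a ∈ w, r a)) ^ 2 * (seqProb T r w l * Xval T c r w l ^ 2)) := by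
          intro l; ring
        rw [Finset.sum_congr rfl fun l _ => hexp l, Finset.sum_add_distrib,
          Finset.sum_add_distrib, ← Finset.mul_sum, ← Finset.mul_sum, ← Finset.mul_sum,
          ← Finset.mul_sum, ← Finset.mul_sum, ← Finset.mul_sum,
          sum_seqProb hB hr, sum_seqProb_X hB hr f w (depth_cond_succs hw hd)]
        ring
      have hR : ∀ w ∈ T.hyper B v,
          ∑ l ∈ seqs T B f w, seqProb T r v (w :: l) * alphaSeq T c r v (w :: l) ^ 2
            = ((∑ a ∈ w, r a) /
            ((∑ a ∈ T.succs v, r a) *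
              ((((T.succs v).card - 1).choose (w.card - 1) : ℕ) : ℝ))) * ((((∑ a ∈ T.succs v, r a) / (∑ a ∈ w, r a)) * ((T.forestCost c w) / (T.forestCost c (T.succs v)))) ^ 2 * (∑ l ∈ seqs T B f w, seqProb T r w l * alphaSeq T c r w l ^ 2)) := by
        intro w hw
        simp only [FinRootedTree.seqProb, FinRootedTree.alphaSeq]
        have hexp : ∀ l, (((∑ a ∈ w, r a) /
            ((∑ a ∈ T.succs v, r a) *
              ((((T.succs v).card - 1).choose (w.card - 1) : ℕ) : ℝ))) * seqProb T r w l) *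
            (((∑ a ∈ T.succs v, r a) / (∑ a ∈ w, r a)) * ((T.forestCost c w) / (T.forestCost c (T.succs v))) * alphaSeq T c r w l) ^ 2
            = ((∑ a ∈ w, r a) /
            ((∑ a ∈ T.succs v, r a) *
              ((((T.succs v).card - 1).choose (w.card - 1) : ℕ) : ℝ))) * ((((∑ a ∈ T.succs v, r a) / (∑ a ∈ w, r a)) * ((T.forestCost c w) / (T.forestCost c (T.succs v)))) ^ 2 *
                (seqProb T r w l * alphaSeq T c r w l ^ 2)) := by
          intro l; ring
        rw [Finset.sum_congr rfl fun l _ => hexp l, ← Finset.mul_sum, ← Finset.mul_sum]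
      have hY : (T.forestCost c (T.succs v)) ^ 2 ≤ ∑ w ∈ T.hyper B v, ((∑ a ∈ w, r a) /
            ((∑ a ∈ T.succs v, r a) *
              ((((T.succs v).card - 1).choose (w.card - 1) : ℕ) : ℝ))) * (((∑ a ∈ T.succs v, r a) / (∑ a ∈ w, r a)) ^ 2 * ((T.forestCost c w) ^ 2 * (∑ l ∈ seqs T B f w, seqProb T r w l * alphaSeq T c r w l ^ 2))) := by
        calc (T.forestCost c (T.succs v)) ^ 2 = (∑ w ∈ T.hyper B v, ((∑ a ∈ w, r a) /
            ((∑ a ∈ T.succs v, r a) *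
              ((((T.succs v).card - 1).choose (w.card - 1) : ℕ) : ℝ))) * (((∑ a ∈ T.succs v, r a) / (∑ a ∈ w, r a)) * (T.forestCost c w))) ^ 2 := by rw [hPC]
          _ ≤ (∑ w ∈ T.hyper B v, ((∑ a ∈ w, r a) /
            ((∑ a ∈ T.succs v, r a) *
              ((((T.succs v).card - 1).choose (w.card - 1) : ℕ) : ℝ)))) *
              ∑ w ∈ T.hyper B v, ((∑ a ∈ w, r a) /
            ((∑ a ∈ T.succs v, r a) *
              ((((T.succs v).card - 1).choose (w.card - 1) : ℕ) : ℝ))) * (((∑ a ∈ T.succs v, r a) / (∑ a ∈ w, r a)) * (T.forestCost c w)) ^ 2 := by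
            have h := sq_sum_le_sum_mul (T.hyper B v) (fun w => ((∑ a ∈ w, r a) /
            ((∑ a ∈ T.succs v, r a) *
              ((((T.succs v).card - 1).choose (w.card - 1) : ℕ) : ℝ))))
              (fun w => ((∑ a ∈ T.succs v, r a) / (∑ a ∈ w, r a)) * (T.forestCost c w)) hPnn
            simpa using h
          _ = ∑ w ∈ T.hyper B v, ((∑ a ∈ w, r a) /
            ((∑ a ∈ T.succs v, r a) *
              ((((T.succs v).card - 1).choose (w.card - 1) : ℕ) : ℝ))) * (((∑ a ∈ T.succs v, r a) / (∑ a ∈ w, r a)) * (T.forestCost c w)) ^ 2 := by rw [hP1, one_mul]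
          _ ≤ ∑ w ∈ T.hyper B v, ((∑ a ∈ w, r a) /
            ((∑ a ∈ T.succs v, r a) *
              ((((T.succs v).card - 1).choose (w.card - 1) : ℕ) : ℝ))) * (((∑ a ∈ T.succs v, r a) / (∑ a ∈ w, r a)) ^ 2 * ((T.forestCost c w) ^ 2 * (∑ l ∈ seqs T B f w, seqProb T r w l * alphaSeq T c r w l ^ 2))) := by
            refine Finset.sum_le_sum fun w hw => ?_
            have h1 := one_le_A2 hB hr hpos f w
            have h2 := hPnn w hw
            nlinarith [sq_nonneg (((∑ a ∈ T.succs v, r a) / (∑ a ∈ w, r a)) * (T.forestCost c w)),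
              mul_nonneg (mul_nonneg h2 (sq_nonneg (((∑ a ∈ T.succs v, r a) / (∑ a ∈ w, r a)) * (T.forestCost c w)))) (sub_nonneg.2 h1)]
      rw [sum_seqs_succ hS, sum_seqs_succ hS, Finset.sum_congr rfl hL,
        Finset.sum_congr rfl hR]
      have hsplit : ∑ w ∈ T.hyper B v,
          ((∑ a ∈ w, r a) /
            ((∑ a ∈ T.succs v, r a) *
              ((((T.succs v).card - 1).choose (w.card - 1) : ℕ) : ℝ))) * ((∑ x ∈ v, c x) ^ 2 + 2 * (∑ x ∈ v, c x) * (((∑ a ∈ T.succs v, r a) / (∑ a ∈ w, r a)) * (T.forestCost c w)) + ((∑ a ∈ T.succs v, r a) / (∑ a ∈ w, r a)) ^ 2 * (∑ l ∈ seqs T B f w, seqProb T r w l * Xval T c r w l ^ 2))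
          ≤ (∑ x ∈ v, c x) ^ 2 + 2 * (∑ x ∈ v, c x) * (T.forestCost c (T.succs v)) +
            ∑ w ∈ T.hyper B v, ((∑ a ∈ w, r a) /
            ((∑ a ∈ T.succs v, r a) *
              ((((T.succs v).card - 1).choose (w.card - 1) : ℕ) : ℝ))) * (((∑ a ∈ T.succs v, r a) / (∑ a ∈ w, r a)) ^ 2 * ((T.forestCost c w) ^ 2 * (∑ l ∈ seqs T B f w, seqProb T r w l * alphaSeq T c r w l ^ 2))) := by
        have hb : ∀ w ∈ T.hyper B v,
            ((∑ a ∈ w, r a) /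
            ((∑ a ∈ T.succs v, r a) *
              ((((T.succs v).card - 1).choose (w.card - 1) : ℕ) : ℝ))) * ((∑ x ∈ v, c x) ^ 2 + 2 * (∑ x ∈ v, c x) * (((∑ a ∈ T.succs v, r a) / (∑ a ∈ w, r a)) * (T.forestCost c w)) + ((∑ a ∈ T.succs v, r a) / (∑ a ∈ w, r a)) ^ 2 * (∑ l ∈ seqs T B f w, seqProb T r w l * Xval T c r w l ^ 2))
            ≤ ((∑ a ∈ w, r a) /
            ((∑ a ∈ T.succs v, r a) *
              ((((T.succs v).card - 1).choose (w.card - 1) : ℕ) : ℝ))) * (∑ x ∈ v, c x) ^ 2 + (2 * (∑ x ∈ v, c x)) * (((∑ a ∈ w, r a) /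
            ((∑ a ∈ T.succs v, r a) *
              ((((T.succs v).card - 1).choose (w.card - 1) : ℕ) : ℝ))) * (((∑ a ∈ T.succs v, r a) / (∑ a ∈ w, r a)) * (T.forestCost c w)))
              + ((∑ a ∈ w, r a) /
            ((∑ a ∈ T.succs v, r a) *
              ((((T.succs v).card - 1).choose (w.card - 1) : ℕ) : ℝ))) * (((∑ a ∈ T.succs v, r a) / (∑ a ∈ w, r a)) ^ 2 * ((T.forestCost c w) ^ 2 * (∑ l ∈ seqs T B f w, seqProb T r w l * alphaSeq T c r w l ^ 2))) := by
          intro w hw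
          have hE := ih w (hyper_nonempty hB hSne hw) (depth_cond_succs hw hd)
          have h2 := hPnn w hw
          nlinarith [mul_nonneg h2 (sq_nonneg (((∑ a ∈ T.succs v, r a) / (∑ a ∈ w, r a)))),
            mul_le_mul_of_nonneg_left hE (mul_nonneg h2 (sq_nonneg (((∑ a ∈ T.succs v, r a) / (∑ a ∈ w, r a)))))]
        calc ∑ w ∈ T.hyper B v,
            ((∑ a ∈ w, r a) /
            ((∑ a ∈ T.succs v, r a) *
              ((((T.succs v).card - 1).choose (w.card - 1) : ℕ) : ℝ))) * ((∑ x ∈ v, c x) ^ 2 + 2 * (∑ x ∈ v, c x) * (((∑ a ∈ T.succs v, r a) / (∑ a ∈ w, r a)) * (T.forestCost c w)) + ((∑ a ∈ T.succs v, r a) / (∑ a ∈ w, r a)) ^ 2 * (∑ l ∈ seqs T B f w, seqProb T r w l * Xval T c r w l ^ 2))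
            ≤ ∑ w ∈ T.hyper B v, (((∑ a ∈ w, r a) /
            ((∑ a ∈ T.succs v, r a) *
              ((((T.succs v).card - 1).choose (w.card - 1) : ℕ) : ℝ))) * (∑ x ∈ v, c x) ^ 2 + (2 * (∑ x ∈ v, c x)) * (((∑ a ∈ w, r a) /
            ((∑ a ∈ T.succs v, r a) *
              ((((T.succs v).card - 1).choose (w.card - 1) : ℕ) : ℝ))) * (((∑ a ∈ T.succs v, r a) / (∑ a ∈ w, r a)) * (T.forestCost c w)))
              + ((∑ a ∈ w, r a) /
            ((∑ a ∈ T.succs v, r a) *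
              ((((T.succs v).card - 1).choose (w.card - 1) : ℕ) : ℝ))) * (((∑ a ∈ T.succs v, r a) / (∑ a ∈ w, r a)) ^ 2 * ((T.forestCost c w) ^ 2 * (∑ l ∈ seqs T B f w, seqProb T r w l * alphaSeq T c r w l ^ 2)))) := Finset.sum_le_sum hb
          _ = (∑ x ∈ v, c x) ^ 2 + 2 * (∑ x ∈ v, c x) * (T.forestCost c (T.succs v)) +
              ∑ w ∈ T.hyper B v, ((∑ a ∈ w, r a) /
            ((∑ a ∈ T.succs v, r a) *
              ((((T.succs v).card - 1).choose (w.card - 1) : ℕ) : ℝ))) * (((∑ a ∈ T.succs v, r a) / (∑ a ∈ w, r a)) ^ 2 * ((T.forestCost c w) ^ 2 * (∑ l ∈ seqs T B f w, seqProb T r w l * alphaSeq T c r w l ^ 2))) := by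
            rw [Finset.sum_add_distrib, Finset.sum_add_distrib, ← Finset.sum_mul,
              ← Finset.mul_sum, hP1, hPC, one_mul]
      refine le_trans hsplit ?_
      have hRHSeq : T.forestCost c v ^ 2 *
          ∑ w ∈ T.hyper B v, ((∑ a ∈ w, r a) /
            ((∑ a ∈ T.succs v, r a) *
              ((((T.succs v).card - 1).choose (w.card - 1) : ℕ) : ℝ))) * ((((∑ a ∈ T.succs v, r a) / (∑ a ∈ w, r a)) * ((T.forestCost c w) / (T.forestCost c (T.succs v)))) ^ 2 * (∑ l ∈ seqs T B f w, seqProb T r w l * alphaSeq T c r w l ^ 2))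
          = ((∑ x ∈ v, c x) + (T.forestCost c (T.succs v))) ^ 2 *
            ((∑ w ∈ T.hyper B v, ((∑ a ∈ w, r a) /
            ((∑ a ∈ T.succs v, r a) *
              ((((T.succs v).card - 1).choose (w.card - 1) : ℕ) : ℝ))) * (((∑ a ∈ T.succs v, r a) / (∑ a ∈ w, r a)) ^ 2 * ((T.forestCost c w) ^ 2 * (∑ l ∈ seqs T B f w, seqProb T r w l * alphaSeq T c r w l ^ 2)))) / (T.forestCost c (T.succs v)) ^ 2) := by
        rw [forestCost_rec (T := T) (c := c) v]
        congr 1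
        rw [Finset.sum_div]
        refine Finset.sum_congr rfl fun w hw => ?_
        field_simp
      rw [hRHSeq]
      set Y := ∑ w ∈ T.hyper B v, ((∑ a ∈ w, r a) /
            ((∑ a ∈ T.succs v, r a) *
              ((((T.succs v).card - 1).choose (w.card - 1) : ℕ) : ℝ))) * (((∑ a ∈ T.succs v, r a) / (∑ a ∈ w, r a)) ^ 2 * ((T.forestCost c w) ^ 2 * (∑ l ∈ seqs T B f w, seqProb T r w l * alphaSeq T c r w l ^ 2))) with hYdef
      have hkey : ((∑ x ∈ v, c x) ^ 2 + 2 * (∑ x ∈ v, c x) * (T.forestCost c (T.succs v)) + Y) * (T.forestCost c (T.succs v)) ^ 2 ≤ ((∑ x ∈ v, c x) + (T.forestCost c (T.succs v))) ^ 2 * Y := by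
        nlinarith [mul_nonneg (mul_nonneg hcv hcv) (sub_nonneg.2 hY),
          mul_nonneg (mul_nonneg hcv hCS.le) (sub_nonneg.2 hY)]
      calc (∑ x ∈ v, c x) ^ 2 + 2 * (∑ x ∈ v, c x) * (T.forestCost c (T.succs v)) + Y
          = (((∑ x ∈ v, c x) ^ 2 + 2 * (∑ x ∈ v, c x) * (T.forestCost c (T.succs v)) + Y) * (T.forestCost c (T.succs v)) ^ 2) / (T.forestCost c (T.succs v)) ^ 2 := by
            field_simp
        _ ≤ (((∑ x ∈ v, c x) + (T.forestCost c (T.succs v))) ^ 2 * Y) / (T.forestCost c (T.succs v)) ^ 2 :=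
            by
              gcongr
        _ = ((∑ x ∈ v, c x) + (T.forestCost c (T.succs v))) ^ 2 * (Y / (T.forestCost c (T.succs v)) ^ 2) := by ring

end Lemmas

/-- Paper's Theorem 6: the squared coefficient of variation of the SEI estimate
is bounded by the variance of `α` over the random hypernode sequence:
`CV²(|v|·C_SEI(T_v)) ≤ Var(α(v, x_1, …, x_n))`. -/
theorem sei_cv2_le_var_alpha (T : FinRootedTree V) (c : V → ℝ)
    (hc : ∀ x, 0 ≤ c x) (hpos : ∀ x : V, 0 < T.subtreeCost c x)
    (B : ℕ) (hB : 1 ≤ B) (r : V → ℝ) (hr : ∀ x : V, 0 < r x)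
    (v : Finset V) (hv : T.IsHypernode v) :
    seiCV2 T c B r (Fintype.card V) v ≤
      (∑ l ∈ seqs T B (Fintype.card V) v,
        seqProb T r v l * alphaSeq T c r v l ^ 2) -
      (∑ l ∈ seqs T B (Fintype.card V) v,
        seqProb T r v l * alphaSeq T c r v l) ^ 2 := by
  obtain ⟨hvne, _⟩ := hv
  have hdcond : ∀ x ∈ v, Fintype.card V ≤ T.depth x + Fintype.card V :=
    fun x _ => Nat.le_add_left _ _
  have hv0 : ((v.card : ℕ) : ℝ) ≠ 0 := Nat.cast_ne_zero.2 (Finset.card_ne_zero.2 hvne)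
  have hE1 : (seiE T c B r (Fintype.card V) v fun y => (v.card : ℝ) * y)
      = T.forestCost c v := by
    rw [seiE_eq hB hr _ v _ hvne, ← sum_seqProb_X hB hr _ v hdcond]
    refine Finset.sum_congr rfl fun l _ => ?_
    show seqProb T r v l * ((v.card : ℝ) * (Xval T c r v l / (v.card : ℝ))) = _
    rw [mul_comm ((v.card : ℝ)) _, div_mul_cancel₀ _ hv0]
  have hE2 : (seiE T c B r (Fintype.card V) v fun y => ((v.card : ℝ) * y) ^ 2)
      = ∑ l ∈ seqs T B (Fintype.card V) v, seqProb T r v l * Xval T c r v l ^ 2 := by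
    rw [seiE_eq hB hr _ v _ hvne]
    refine Finset.sum_congr rfl fun l _ => ?_
    show seqProb T r v l * ((v.card : ℝ) * (Xval T c r v l / (v.card : ℝ))) ^ 2 = _
    rw [mul_comm ((v.card : ℝ)) _, div_mul_cancel₀ _ hv0]
  have hA1 : ∑ l ∈ seqs T B (Fintype.card V) v,
      seqProb T r v l * alphaSeq T c r v l = 1 := sum_seqProb_alpha hB hr hpos _ v
  have hM := main_sq_ineq hB hr hpos hc (Fintype.card V) v hvne hdcond
  have hC : 0 < T.forestCost c v := forestCost_pos hpos hvne
  rw [FinRootedTree.seiCV2, FinRootedTree.seiVar, hE1, hE2, hA1, one_pow]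
  rw [div_le_iff₀ (by positivity)]
  nlinarith [hM]

end FinRootedTree
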